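/- For every metric space (S,ρ), every sequence x : ℕ → S, all integers m, k, n ≥ 1 and every real r ≥ 0, with h = k + m − 1 and n' = n + m − 1, the k-recurrence rate satisfies n²·RR^m_k(x,n,r) = (n')²·[RR_h(x,n',r) − (m − 1)·(C_h(x,n',r) − C_{h+1}(x,n',r))], where RR_h = RR^1_h and C_h = C^1_h denote the non-embedded (m = 1) quantities. -/

import Mathlib

open Filter Topology MeasureTheory

/-- `dmax h x y = max_{0 ≤ l < h} dist (x l) (y l)` (equals 0 if `h = 0`). -/
noncomputable def dmax {S : Type*} [MetricSpace S] (h : ℕ) (x y : ℕ → S) : ℝ :=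
  (((Finset.range h).sup fun l => nndist (x l) (y l) : NNReal) : ℝ)

/-- the shifted sequence `x^{(i)}`. -/
def shift {S : Type*} (i : ℕ) (x : ℕ → S) : ℕ → S := fun l => x (i + l)

/-- `(i,j)` is an `r`-recurrence in the `m`'th embedding of the trajectory of `x`. -/
def isRec {S : Type*} [MetricSpace S] (m : ℕ) (x : ℕ → S) (r : ℝ) (i j : ℕ) : Prop :=
  dmax m (shift i x) (shift j x) ≤ r

open Classical in
/-- `L^m_k(x,n,r)`: the number of diagonal lines of length `k`
in the `n × n` recurrence plot. -/
noncomputable def Lcount {S : Type*} [MetricSpace S] (m k : ℕ) (x : ℕ → S) (n : ℕ)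
    (r : ℝ) : ℕ :=
  ((Finset.range (n + 1) ×ˢ Finset.range (n + 1)).filter fun p =>
    p.1 + k ≤ n ∧ p.2 + k ≤ n ∧
    (∀ h < k, isRec m x r (p.1 + h) (p.2 + h)) ∧
    (p.1 = 0 ∨ p.2 = 0 ∨ ¬ isRec m x r (p.1 - 1) (p.2 - 1)) ∧
    (p.1 + k = n ∨ p.2 + k = n ∨ ¬ isRec m x r (p.1 + k) (p.2 + k))).card

open Classical in
/-- `n² · C^m_k(x,n,r)`: the number of pairs `(i,j)`, `0 ≤ i,j ≤ n-k`, with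
`d^m_k(x^{(i)}, x^{(j)}) ≤ r`. -/
noncomputable def Ccount {S : Type*} [MetricSpace S] (m k : ℕ) (x : ℕ → S) (n : ℕ)
    (r : ℝ) : ℕ :=
  ((Finset.range (n + 1) ×ˢ Finset.range (n + 1)).filter fun p =>
    p.1 + k ≤ n ∧ p.2 + k ≤ n ∧
    dmax (m + k - 1) (shift p.1 x) (shift p.2 x) ≤ r).card

/-- The correlation sum `C^m_k(x,n,r)`. -/
noncomputable def Csum {S : Type*} [MetricSpace S] (m k : ℕ) (x : ℕ → S) (n : ℕ)
    (r : ℝ) : ℝ :=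
  (Ccount m k x n r : ℝ) / (n : ℝ) ^ 2

/-- The `k`-recurrence rate `RR^m_k(x,n,r) = (1/n²) Σ_{l ≥ k} l · L^m_l(x,n,r)`. -/
noncomputable def RRsum {S : Type*} [MetricSpace S] (m k : ℕ) (x : ℕ → S) (n : ℕ)
    (r : ℝ) : ℝ :=
  (1 / (n : ℝ) ^ 2) * ∑' l : ℕ, if k ≤ l then (l : ℝ) * (Lcount m l x n r : ℝ) else 0

/-!
In the `m`'th embedding, `(i,j)` is a recurrence iff the non-embedded plot has recurrences
at `(i+s, j+s)` for all `s < m`. Hence a diagonal line of length `l` in the embedded `n × n` plot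
is exactly a diagonal line of length `l + m - 1` in the non-embedded `(n+m-1) × (n+m-1)` plot,
so the embedded recurrence rate is a sum of `(l - (m-1)) · L_l` over the non-embedded lines.
The correction term comes from `C_h - C_{h+1} = Σ_{l ≥ h} L_l`: the windows of length `h`
that cannot be prolonged by one step are exactly the final windows of the lines of length `≥ h`.
-/

open Finset

section DiagonalLines

variable (R : ℕ → ℕ → Prop)

def DiagRun (k i j : ℕ) : Prop := ∀ h < k, R (i + h) (j + h)

structure IsDiagLine (n k i j : ℕ) : Prop where
  left_le : i + k ≤ n
  right_le : j + k ≤ n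
  run : DiagRun R k i j
  start : i = 0 ∨ j = 0 ∨ ¬R (i - 1) (j - 1)
  finish : i + k = n ∨ j + k = n ∨ ¬R (i + k) (j + k)

open Classical in
noncomputable def runSet (n k : ℕ) : Finset (ℕ × ℕ) :=
  (range (n + 1) ×ˢ range (n + 1)).filter fun p =>
    p.1 + k ≤ n ∧ p.2 + k ≤ n ∧ DiagRun R k p.1 p.2

open Classical in
noncomputable def lineSet (n k : ℕ) : Finset (ℕ × ℕ) :=
  (range (n + 1) ×ˢ range (n + 1)).filter fun p => IsDiagLine R n k p.1 p.2

variable {R} {a b k l m n i j : ℕ}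

theorem DiagRun.mono (h : DiagRun R a i j) (hba : b ≤ a) : DiagRun R b i j :=
  fun s hs => h s (hs.trans_le hba)

theorem diagRun_add : DiagRun R (a + b) i j ↔ DiagRun R a i j ∧ DiagRun R b (i + a) (j + a) := by
  refine ⟨fun h => ⟨h.mono (Nat.le_add_right a b), fun s hs => ?_⟩, fun ⟨ha, hb⟩ s hs => ?_⟩
  · simpa only [add_assoc] using h (a + s) (by omega)
  · rcases Nat.lt_or_ge s a with hsa | hsa
    · exact ha s hsa
    · simpa only [add_assoc, Nat.add_sub_cancel' hsa] using hb (s - a) (by omega)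

theorem diagRun_succ_right : DiagRun R (k + 1) i j ↔ DiagRun R k i j ∧ R (i + k) (j + k) := by
  simp only [DiagRun, Nat.forall_lt_succ_right]

theorem diagRun_succ_left : DiagRun R (k + 1) i j ↔ R i j ∧ DiagRun R k (i + 1) (j + 1) := by
  simp only [DiagRun, Nat.forall_lt_succ_left, add_zero, add_assoc, add_comm 1]

theorem diagRun_diagRun_succ (hl : 0 < l) :
    DiagRun (DiagRun R (m + 1)) l i j ↔ DiagRun R (l + m) i j := by
  simp only [DiagRun, add_assoc]
  refine ⟨fun h t ht => ?_, fun h a ha b hb => h (a + b) (by omega)⟩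
  simpa only [Nat.add_sub_cancel' (min_le_left t (l - 1))] using
    h (min t (l - 1)) (by omega) (t - min t (l - 1)) (by omega)

theorem start_diagRun_succ_iff (hrun : DiagRun R (l + m) i j) :
    (i = 0 ∨ j = 0 ∨ ¬DiagRun R (m + 1) (i - 1) (j - 1)) ↔
      (i = 0 ∨ j = 0 ∨ ¬R (i - 1) (j - 1)) := by
  rcases i with _ | i
  · simp
  rcases j with _ | j
  · simp
  have : DiagRun R m (i + 1) (j + 1) := hrun.mono (Nat.le_add_left m l)
  simp [diagRun_succ_left, this]

theorem finish_diagRun_succ_iff (hrun : DiagRun R (l + m) i j) :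
    DiagRun R (m + 1) (i + l) (j + l) ↔ R (i + (l + m)) (j + (l + m)) := by
  simp [diagRun_succ_right, (diagRun_add.mp hrun).2, add_assoc]

theorem isDiagLine_diagRun_succ_iff (hl : 0 < l) :
    IsDiagLine (DiagRun R (m + 1)) n l i j ↔ IsDiagLine R (n + m) (l + m) i j := by
  refine ⟨fun ⟨hi, hj, hrun, hstart, hfinish⟩ => ?_, fun ⟨hi, hj, hrun, hstart, hfinish⟩ => ?_⟩
  · rw [diagRun_diagRun_succ hl] at hrun
    rw [start_diagRun_succ_iff hrun] at hstart
    rw [finish_diagRun_succ_iff hrun] at hfinish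
    exact ⟨by omega, by omega, hrun, hstart, hfinish.imp (by omega) (Or.imp (by omega) id)⟩
  · refine ⟨by omega, by omega, (diagRun_diagRun_succ hl).mpr hrun,
      (start_diagRun_succ_iff hrun).mpr hstart, ?_⟩
    rw [finish_diagRun_succ_iff hrun]
    exact hfinish.imp (by omega) (Or.imp (by omega) id)

theorem mem_runSet {p : ℕ × ℕ} :
    p ∈ runSet R n k ↔ p.1 + k ≤ n ∧ p.2 + k ≤ n ∧ DiagRun R k p.1 p.2 := by
  simp only [runSet, mem_filter, mem_product, mem_range]
  exact ⟨And.right, fun h => ⟨⟨by omega, by omega⟩, h⟩⟩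

theorem mem_lineSet {p : ℕ × ℕ} : p ∈ lineSet R n k ↔ IsDiagLine R n k p.1 p.2 := by
  simp only [lineSet, mem_filter, mem_product, mem_range]
  exact ⟨And.right, fun h => ⟨⟨by have := h.left_le; omega, by have := h.right_le; omega⟩, h⟩⟩

theorem mem_runSet_sdiff_succ {p : ℕ × ℕ} :
    p ∈ runSet R n k \ runSet R n (k + 1) ↔ p.1 + k ≤ n ∧ p.2 + k ≤ n ∧ DiagRun R k p.1 p.2 ∧
      (p.1 + k = n ∨ p.2 + k = n ∨ ¬R (p.1 + k) (p.2 + k)) := by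
  rw [Finset.mem_sdiff, mem_runSet, mem_runSet, diagRun_succ_right]
  constructor
  · rintro ⟨⟨hi, hj, hrun⟩, hlong⟩
    refine ⟨hi, hj, hrun, ?_⟩
    by_contra! h
    exact hlong ⟨by omega, by omega, hrun, h.2.2⟩
  · rintro ⟨hi, hj, hrun, hfinish⟩
    refine ⟨⟨hi, hj, hrun⟩, fun ⟨hi', hj', _, hR⟩ => ?_⟩
    rcases hfinish with h | h | h
    · omega
    · omega
    · exact h hR

theorem IsDiagLine.length_eq_of_end_eq {a₁ b₁ a₂ b₂ l₁ l₂ : ℕ} (h₁ : IsDiagLine R n l₁ a₁ b₁)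
    (h₂ : IsDiagLine R n l₂ a₂ b₂) (ha : a₁ + l₁ = a₂ + l₂) (hb : b₁ + l₁ = b₂ + l₂) : l₁ = l₂ := by
  wlog hle : l₁ ≤ l₂ generalizing a₁ b₁ a₂ b₂ l₁ l₂
  · exact (this h₂ h₁ ha.symm hb.symm (by omega)).symm
  by_contra hne
  have hR := h₂.run (l₂ - l₁ - 1) (by omega)
  rw [show a₂ + (l₂ - l₁ - 1) = a₁ - 1 by omega, show b₂ + (l₂ - l₁ - 1) = b₁ - 1 by omega] at hR
  rcases h₁.start with h | h | h
  · omega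
  · omega
  · exact h hR

theorem exists_isDiagLine_end_eq (hi : i + k ≤ n) (hj : j + k ≤ n) (hrun : DiagRun R k i j)
    (hfinish : i + k = n ∨ j + k = n ∨ ¬R (i + k) (j + k)) :
    ∃ l a b, k ≤ l ∧ a + l = i + k ∧ b + l = j + k ∧ IsDiagLine R n l a b := by
  induction i generalizing j k with
  | zero => exact ⟨k, 0, j, le_rfl, rfl, rfl, hi, hj, hrun, Or.inl rfl, hfinish⟩
  | succ i ih =>
    rcases j with _ | j
    · exact ⟨k, i + 1, 0, le_rfl, rfl, rfl, hi, hj, hrun, Or.inr (Or.inl rfl), hfinish⟩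
    by_cases hR : R i j
    · obtain ⟨l, a, b, hkl, ha, hb, hline⟩ := ih (k := k + 1) (j := j) (by omega) (by omega)
        (diagRun_succ_left.mpr ⟨hR, hrun⟩)
        (by simpa only [Nat.add_right_comm _ 1 k, add_assoc] using hfinish)
      exact ⟨l, a, b, by omega, by omega, by omega, hline⟩
    · exact ⟨k, i + 1, j + 1, le_rfl, rfl, rfl, hi, hj, hrun, Or.inr (Or.inr hR), hfinish⟩

theorem IsDiagLine.mem_runSet_sdiff_succ (h : IsDiagLine R n l a b) (hkl : k ≤ l) :
    (a + (l - k), b + (l - k)) ∈ runSet R n k \ runSet R n (k + 1) := by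
  have hrun := h.run
  rw [← Nat.sub_add_cancel hkl] at hrun
  rw [_root_.mem_runSet_sdiff_succ]
  have := h.left_le
  have := h.right_le
  refine ⟨by omega, by omega, (diagRun_add.mp hrun).2, ?_⟩
  simpa only [add_assoc, Nat.sub_add_cancel hkl] using h.finish

theorem card_runSet_eq_card_runSet_succ_add :
    #(runSet R n k) = #(runSet R n (k + 1)) + ∑ l ∈ Icc k n, #(lineSet R n l) := by
  have hsub : runSet R n (k + 1) ⊆ runSet R n k := fun p hp => by
    rw [mem_runSet] at hp ⊢
    exact ⟨by omega, by omega, hp.2.2.mono k.le_succ⟩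
  rw [← card_sdiff_add_card_eq_card hsub, add_comm, ← card_sigma]
  congr 1
  symm
  refine card_nbij (fun q => (q.2.1 + (q.1 - k), q.2.2 + (q.1 - k))) ?_ ?_ ?_
  · rintro ⟨l, a, b⟩ hq
    rw [mem_coe, mem_sigma, mem_Icc, mem_lineSet] at hq
    exact hq.2.mem_runSet_sdiff_succ hq.1.1
  · rintro ⟨l₁, a₁, b₁⟩ hq₁ ⟨l₂, a₂, b₂⟩ hq₂ heq
    rw [mem_coe, mem_sigma, mem_Icc, mem_lineSet] at hq₁ hq₂
    simp only [Prod.mk.injEq] at heq hq₁ hq₂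
    obtain rfl := hq₁.2.length_eq_of_end_eq hq₂.2 (by omega) (by omega)
    obtain ⟨rfl, rfl⟩ : a₁ = a₂ ∧ b₁ = b₂ := by omega
    rfl
  · rintro ⟨i, j⟩ hp
    rw [mem_coe, mem_runSet_sdiff_succ] at hp
    obtain ⟨hi, hj, hrun, hfinish⟩ := hp
    obtain ⟨l, a, b, hkl, ha, hb, h⟩ := exists_isDiagLine_end_eq hi hj hrun hfinish
    refine ⟨⟨l, a, b⟩, ?_, ?_⟩
    · rw [mem_coe, mem_sigma, mem_Icc, mem_lineSet]
      exact ⟨⟨hkl, by dsimp only; have := h.left_le; omega⟩, h⟩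
    · simp only [Prod.mk.injEq]
      omega

theorem lineSet_diagRun_succ (hl : 0 < l) :
    lineSet (DiagRun R (m + 1)) n l = lineSet R (n + m) (l + m) := by
  ext p
  rw [mem_lineSet, mem_lineSet, isDiagLine_diagRun_succ_iff hl]

end DiagonalLines

section RecurrencePlot

variable {S : Type*} [MetricSpace S] {x : ℕ → S} {r : ℝ} {h m k l n : ℕ}

theorem dmax_le_iff {y z : ℕ → S} (hh : 0 < h) :
    dmax h y z ≤ r ↔ ∀ l < h, dist (y l) (z l) ≤ r := by
  have hne : (range h).Nonempty := nonempty_range_iff.mpr hh.ne'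
  rw [dmax, ← sup'_eq_sup hne, apply_sup'_eq_sup'_comp hne _ NNReal.coe_max, sup'_le_iff]
  simp only [mem_range, Function.comp_apply, coe_nndist]

theorem isRec_eq_diagRun (hm : 0 < m) : isRec m x r = DiagRun (isRec 1 x r) m := by
  ext i j
  simp [isRec, dmax_le_iff hm, dmax_le_iff one_pos, DiagRun, shift]

theorem Lcount_eq_card_lineSet : Lcount m k x n r = #(lineSet (isRec m x r) n k) := by
  classical
  unfold Lcount lineSet
  exact congrArg card <| filter_congr fun p _ =>
    ⟨fun ⟨h₁, h₂, h₃, h₄, h₅⟩ => ⟨h₁, h₂, h₃, h₄, h₅⟩,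
      fun ⟨h₁, h₂, h₃, h₄, h₅⟩ => ⟨h₁, h₂, h₃, h₄, h₅⟩⟩

theorem Ccount_one_eq_card_runSet (hk : 0 < k) :
    Ccount 1 k x n r = #(runSet (isRec 1 x r) n k) := by
  classical
  unfold Ccount runSet
  refine congrArg card <| filter_congr fun p _ => and_congr_right' <| and_congr_right' ?_
  rw [Nat.add_sub_cancel_left, ← isRec_eq_diagRun hk]
  rfl

theorem Lcount_succ_eq (hl : 0 < l) : Lcount (m + 1) l x n r = Lcount 1 (l + m) x (n + m) r := by
  rw [Lcount_eq_card_lineSet, Lcount_eq_card_lineSet, isRec_eq_diagRun m.succ_pos,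
    lineSet_diagRun_succ hl]

theorem Ccount_one_eq_add (hk : 0 < k) :
    Ccount 1 k x n r = Ccount 1 (k + 1) x n r + ∑ l ∈ Icc k n, Lcount 1 l x n r := by
  simp only [Ccount_one_eq_card_runSet hk, Ccount_one_eq_card_runSet k.succ_pos,
    Lcount_eq_card_lineSet]
  exact card_runSet_eq_card_runSet_succ_add

theorem Lcount_eq_zero_of_lt (hnk : n < k) : Lcount m k x n r = 0 := by
  rw [Lcount_eq_card_lineSet, card_eq_zero, eq_empty_iff_forall_notMem]
  intro p hp
  have := (mem_lineSet.mp hp).left_le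
  omega

theorem sq_mul_RRsum (hn : n ≠ 0) :
    (n : ℝ) ^ 2 * RRsum m k x n r = ∑ l ∈ Icc k n, (l : ℝ) * Lcount m l x n r := by
  rw [RRsum, one_div, ← mul_assoc, mul_inv_cancel₀ (by positivity), one_mul,
    tsum_eq_sum (s := Icc k n)]
  · exact sum_congr rfl fun l hl => if_pos (mem_Icc.mp hl).1
  · intro l hl
    rcases not_and_or.mp (mem_Icc.not.mp hl) with hkl | hln
    · exact if_neg hkl
    · simp [Lcount_eq_zero_of_lt (not_le.mp hln)]

end RecurrencePlot

theorem embedded_recurrenceRate_eq_nonembedded_general {S : Type*} [MetricSpace S] (x : ℕ → S)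
    (m k n : ℕ) (hm : 1 ≤ m) (hk : 1 ≤ k) (hn : 1 ≤ n) (r : ℝ) :
    (n : ℝ) ^ 2 * RRsum m k x n r =
      ((n + m - 1 : ℕ) : ℝ) ^ 2 *
        (RRsum 1 (k + m - 1) x (n + m - 1) r -
          ((m : ℝ) - 1) *
            (Csum 1 (k + m - 1) x (n + m - 1) r - Csum 1 (k + m) x (n + m - 1) r)) := by
  obtain ⟨m, rfl⟩ := Nat.exists_eq_add_of_le' hm
  simp only [← add_assoc, Nat.add_sub_cancel, Nat.cast_add, Nat.cast_one, add_sub_cancel_right]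
  have hC : (Ccount 1 (k + m) x (n + m) r : ℝ) - Ccount 1 (k + m + 1) x (n + m) r =
      ∑ l ∈ Icc (k + m) (n + m), (Lcount 1 l x (n + m) r : ℝ) := by
    rw [Ccount_one_eq_add (by omega)]
    push_cast
    ring
  calc (n : ℝ) ^ 2 * RRsum (m + 1) k x n r
      = ∑ l ∈ Icc k n, (l : ℝ) * Lcount 1 (l + m) x (n + m) r := by
        rw [sq_mul_RRsum (by omega)]
        exact sum_congr rfl fun l hl => by rw [Lcount_succ_eq (hk.trans (mem_Icc.mp hl).1)]
    _ = ∑ l ∈ Icc (k + m) (n + m), ((l : ℝ) - m) * Lcount 1 l x (n + m) r := by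
        rw [← map_add_right_Icc, sum_map]
        simp
    _ = ((n + m : ℕ) : ℝ) ^ 2 * RRsum 1 (k + m) x (n + m) r -
          m * ∑ l ∈ Icc (k + m) (n + m), (Lcount 1 l x (n + m) r : ℝ) := by
        simp only [sq_mul_RRsum (n := n + m) (by omega), mul_sum, ← sum_sub_distrib, sub_mul]
    _ = _ := by
        rw [← hC, Csum, Csum]
        push_cast
        field_simp

/-- For every metric space `(S,ρ)`, every sequence `x : ℕ → S`,
all integers `m, k, n ≥ 1` and every real `r ≥ 0`, with `h = k + m − 1` and
`n' = n + m − 1`, the `k`-recurrence rate satisfies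
`n² · RR^m_k(x,n,r) = (n')² · [RR_h(x,n',r) − (m − 1)·(C_h(x,n',r) − C_{h+1}(x,n',r))]`,
where `RR_h = RR^1_h` and `C_h = C^1_h` are the non-embedded quantities. -/
theorem embedded_recurrenceRate_eq_nonembedded {S : Type*} [MetricSpace S] (x : ℕ → S)
    (m k n : ℕ) (hm : 1 ≤ m) (hk : 1 ≤ k) (hn : 1 ≤ n) (r : ℝ) (hr : 0 ≤ r) :
    (n : ℝ) ^ 2 * RRsum m k x n r =
      ((n + m - 1 : ℕ) : ℝ) ^ 2 *
        (RRsum 1 (k + m - 1) x (n + m - 1) r -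
          ((m : ℝ) - 1) *
            (Csum 1 (k + m - 1) x (n + m - 1) r - Csum 1 (k + m) x (n + m - 1) r)) :=
  embedded_recurrenceRate_eq_nonembedded_general x m k n hm hk hn r
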